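/- arXiv:1305.4331 — 5 statements merged into one kernel-verified Lean document; each statement's English description precedes it below -/
import Mathlib

section
/- For a Lipschitz function h on a metric space X and any point x ∈ X, limsup_{t → 0⁺} (h(x) - Q_t h(x))/t ≤ (1/4) |∇⁻h|(x)², where |∇⁻h|(x) = limsup_{y → x} [h(y) - h(x)]₋ / d(y,x) (set to 0 at isolated points). -/
open Filter Set

/-- The descending slope `|∇⁻h|(x) = limsup_{y → x} [h(y)-h(x)]₋ / d(y,x)`.
At an isolated point the filter `𝓝[≠] x` is trivial and the `limsup` equals `0` by
the real `sInf` convention, matching the convention of the paper. -/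
noncomputable def descSlope {X : Type*} [MetricSpace X] (h : X → ℝ) (x : X) : ℝ :=
  limsup (fun y => max (h x - h y) 0 / dist y x) (nhdsWithin x {x}ᶜ)

/-- quadratic AM-GM style inequality -/
lemma aux_quad (c d t : ℝ) (ht : 0 < t) : c * d - d ^ 2 / t ≤ c ^ 2 * t / 4 := by
  rw [sub_le_iff_le_add, ← sub_le_iff_le_add', le_div_iff₀ ht]
  nlinarith [sq_nonneg (c * t - 2 * d)]

/-- For a Lipschitz `h` and any `x`,
`limsup_{t → 0⁺} (h x - Q_t h x)/t ≤ (1/4) |∇⁻h|(x)²`. -/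
theorem limsup_infConv_le_descSlope_sq {X : Type*} [MetricSpace X] (h : X → ℝ)
    (L : NNReal) (hL : LipschitzWith L h) (x : X) :
    limsup (fun t : ℝ => (h x - ⨅ y : X, h y + dist x y ^ 2 / t) / t)
        (nhdsWithin 0 (Ioi 0)) ≤ (1 / 4) * (descSlope h x) ^ 2 := by
  have hne : Nonempty X := ⟨x⟩
  set S := descSlope h x with hSdef
  have hlip : ∀ y : X, h x - h y ≤ (L : ℝ) * dist x y := by
    intro y
    have h1 : |h x - h y| ≤ (L : ℝ) * dist x y := by
      simpa [Real.dist_eq] using hL.dist_le_mul x y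
    calc h x - h y ≤ |h x - h y| := le_abs_self _
      _ ≤ (L : ℝ) * dist x y := h1
  have hbdd : ∀ y : X, max (h x - h y) 0 / dist y x ≤ (L : ℝ) := by
    intro y
    rcases eq_or_ne y x with rfl | hy
    · simp
    · rw [div_le_iff₀ (dist_pos.2 hy)]
      refine max_le ?_ (by positivity)
      rw [dist_comm]
      exact hlip y
  have hBounded : IsBoundedUnder (· ≤ ·) (nhdsWithin x ({x}ᶜ : Set X))
      (fun y => max (h x - h y) 0 / dist y x) :=
    isBoundedUnder_of ⟨(L : ℝ), hbdd⟩
  -- S ≥ 0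
  have hS0 : 0 ≤ S := by
    rcases eq_or_neBot (nhdsWithin x ({x}ᶜ : Set X)) with hbot | hne
    · rw [hSdef, descSlope, hbot]
      have hsu : limsup (fun y => max (h x - h y) 0 / dist y x) (⊥ : Filter X)
          = sInf univ := by
        simp [limsup, limsSup]
      rw [hsu, Real.sInf_of_not_bddBelow not_bddBelow_univ]
    · refine le_limsup_of_frequently_le ?_ hBounded
      exact Eventually.frequently (Eventually.of_forall (fun y => by positivity))
  -- BddBelow for the infimum
  have hBdd : ∀ t : ℝ, 0 < t → BddBelow (range fun y : X => h y + dist x y ^ 2 / t) := by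
    intro t ht
    refine ⟨h x - (L : ℝ) ^ 2 * t / 4, ?_⟩
    rintro _ ⟨y, rfl⟩
    have h1 := hlip y
    have h2 := aux_quad (L : ℝ) (dist x y) t ht
    show h x - (L : ℝ) ^ 2 * t / 4 ≤ h y + dist x y ^ 2 / t
    linarith
  -- key estimate
  have key : ∀ c : ℝ, S < c → limsup (fun t : ℝ =>
      (h x - ⨅ y : X, h y + dist x y ^ 2 / t) / t) (nhdsWithin 0 (Ioi 0)) ≤ c ^ 2 / 4 := by
    intro c hc
    have hc0 : 0 < c := lt_of_le_of_lt hS0 hc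
    have hev : ∀ᶠ y in nhdsWithin x ({x}ᶜ : Set X),
        max (h x - h y) 0 / dist y x < c := eventually_lt_of_limsup_lt hc hBounded
    obtain ⟨r, hr, hball⟩ := Metric.nhdsWithin_basis_ball.eventually_iff.1 hev
    have hnear : ∀ y : X, dist y x < r → h x - h y ≤ c * dist y x := by
      intro y hy
      rcases eq_or_ne y x with rfl | hyx
      · simp
      · have hlt := hball ⟨hy, hyx⟩
        have hd : 0 < dist y x := dist_pos.2 hyx
        have hlt2 := (div_lt_iff₀ hd).1 hlt
        calc h x - h y ≤ max (h x - h y) 0 := le_max_left _ _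
          _ ≤ c * dist y x := hlt2.le
    have hrL : 0 < r / ((L : ℝ) + 1) := by positivity
    have hevt : ∀ᶠ t : ℝ in nhdsWithin 0 (Ioi 0),
        (h x - ⨅ y : X, h y + dist x y ^ 2 / t) / t ≤ c ^ 2 / 4 := by
      filter_upwards [Ioo_mem_nhdsGT_of_mem ⟨le_refl (0 : ℝ), hrL⟩] with t ht
      obtain ⟨ht0, htr⟩ := ht
      rw [div_le_iff₀ ht0, sub_le_iff_le_add]
      have hle : h x - c ^ 2 / 4 * t ≤ ⨅ y : X, h y + dist x y ^ 2 / t := by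
        refine le_ciInf fun y => ?_
        rcases lt_or_ge (dist y x) r with hyr | hyr
        · have h1 := hnear y hyr
          have h2 := aux_quad c (dist y x) t ht0
          rw [dist_comm x y]
          linarith
        · have h1 := hlip y
          have hd : (0 : ℝ) < dist y x := lt_of_lt_of_le hr hyr
          have hdc : dist x y = dist y x := dist_comm x y
          have htd : t * ((L : ℝ) + 1) < dist y x := by
            calc t * ((L : ℝ) + 1) < r / ((L : ℝ) + 1) * ((L : ℝ) + 1) := by
                  apply mul_lt_mul_of_pos_right htr; positivity
              _ = r := div_mul_cancel₀ r (by positivity)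
              _ ≤ dist y x := hyr
          have hLd : (L : ℝ) * dist y x ≤ dist y x ^ 2 / t := by
            rw [le_div_iff₀ ht0]
            nlinarith
          rw [hdc] at h1 ⊢
          nlinarith [sq_nonneg c]
      linarith
    have hcob : IsCoboundedUnder (· ≤ ·) (nhdsWithin (0 : ℝ) (Ioi 0))
        (fun t : ℝ => (h x - ⨅ y : X, h y + dist x y ^ 2 / t) / t) := by
      refine isCoboundedUnder_le_of_eventually_le _ (x := 0) ?_
      filter_upwards [self_mem_nhdsWithin] with t ht
      have ht0 : (0 : ℝ) < t := ht
      have hinf : (⨅ y : X, h y + dist x y ^ 2 / t) ≤ h x := by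
        have := ciInf_le (hBdd t ht0) x
        simpa using this
      exact div_nonneg (by linarith) ht0.le
    exact limsup_le_of_le hcob hevt
  -- conclude by letting c → S
  have htend : Tendsto (fun ε : ℝ => (S + ε) ^ 2 / 4) (nhdsWithin 0 (Ioi 0))
      (nhds ((1 / 4) * S ^ 2)) := by
    have hcont : Tendsto (fun ε : ℝ => (S + ε) ^ 2 / 4) (nhds 0) (nhds ((S + 0) ^ 2 / 4)) :=
      Continuous.tendsto (by continuity) 0
    have heq : (S + 0) ^ 2 / 4 = (1 / 4) * S ^ 2 := by ring
    rw [heq] at hcont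
    exact hcont.mono_left nhdsWithin_le_nhds
  refine ge_of_tendsto htend ?_
  filter_upwards [self_mem_nhdsWithin] with ε hε
  exact key (S + ε) (by linarith [(mem_Ioi.1 hε : (0:ℝ) < ε)])
end

section
/- Let h be a Lipschitz function on a metric space X and ν a Borel probability measure on X. Then limsup_{t→0⁺} (1/t) ∫ (h - Q_t h) dν ≤ (1/4) ∫ |∇⁻h|² dν. -/
/-!
If the descending slope of `h` at `x` is `< a`, then for small `t` every competitor `y` in
`Q_t h x` satisfies `h x - h y ≤ a d(x,y)` when it is close to `x`, and
`h x - h y ≤ L d(x,y) ≤ d(x,y)²/t` when it is far; Young's inequality `a d ≤ d²/t + a² t/4`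
then gives `h x - Q_t h x ≤ a² t/4`. Hence `limsup_{t→0⁺} (h - Q_t h)/t ≤ |∇⁻h|²/4` pointwise,
and since `0 ≤ (h - Q_t h)/t ≤ L²/4`, the reverse Fatou lemma integrates this bound.
Measurability of `|∇⁻h|` comes from writing it as a countable infimum of lower semicontinuous
suprema of the difference quotient over punctured balls.
-/

open Filter Set MeasureTheory

open Topology Metric

theorem Filter.HasBasis.limsup_eq_iInf_iSup_indicator {α : Type*} {l : Filter α}
    {s : ℕ → Set α} (hl : l.HasBasis (fun _ => True) s) {u : α → ℝ} (hu0 : 0 ≤ u)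
    (hu : BddAbove (range u)) :
    limsup u l = ⨅ n, ⨆ a, (s n).indicator u a := by
  have hP0 (n : ℕ) : 0 ≤ ⨆ a, (s n).indicator u a :=
    Real.iSup_nonneg (indicator_nonneg fun a _ => hu0 a)
  have hPbdd : BddBelow (range fun n => ⨆ a, (s n).indicator u a) :=
    ⟨0, forall_mem_range.2 hP0⟩
  rcases l.eq_or_neBot with rfl | hne
  · obtain ⟨n, -, hn⟩ := hl.mem_iff.1 (mem_bot (s := ∅))
    have hPn : ⨆ a, (s n).indicator u a = 0 := by simp [subset_empty_iff.1 hn]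
    -- junk value: `limsup u ⊥ = sInf univ = 0` in `ℝ`
    have hlimsup : limsup u ⊥ = 0 := by simp [limsup, limsSup]
    rw [hlimsup]
    exact le_antisymm (le_ciInf hP0) (hPn ▸ ciInf_le hPbdd n)
  obtain ⟨C, hC⟩ := hu
  have hsupbdd (n : ℕ) : BddAbove (range fun a => (s n).indicator u a) := by
    refine ⟨max C 0, forall_mem_range.2 fun a => ?_⟩
    by_cases ha : a ∈ s n
    · simpa [ha] using le_max_of_le_left (hC (mem_range_self a))
    · simp [ha]
  apply le_antisymm
  · refine le_ciInf fun n => limsup_le_of_le (isCoboundedUnder_le_of_le l hu0) ?_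
    filter_upwards [hl.mem_of_mem trivial] with a ha
    rw [← indicator_of_mem ha u]
    exact le_ciSup (hsupbdd n) a
  · by_contra! hlt
    obtain ⟨c, hc, hcP⟩ := exists_between hlt
    have hev : ∀ᶠ a in l, u a < c :=
      eventually_lt_of_limsup_lt hc ⟨C, eventually_map.2 (.of_forall fun a => hC ⟨a, rfl⟩)⟩
    obtain ⟨n, -, hn⟩ := hl.eventually_iff.1 hev
    obtain ⟨a₀, ha₀⟩ := hev.exists
    have : Nonempty α := ⟨a₀⟩
    have hc0 : 0 ≤ c := (hu0 a₀).trans ha₀.le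
    have hPn : ⨆ a, (s n).indicator u a ≤ c := ciSup_le fun a => by
      by_cases ha : a ∈ s n
      · simpa [ha] using (hn ha).le
      · simpa [ha] using hc0
    exact (ciInf_le hPbdd n |>.trans hPn).not_gt hcP

theorem IsOpen.lowerSemicontinuous_indicator_of_continuousOn {α : Type*} [TopologicalSpace α]
    {s : Set α} {f : α → ℝ} (hs : IsOpen s) (hf : ContinuousOn f s) (hf0 : 0 ≤ f) :
    LowerSemicontinuous (s.indicator f) := by
  intro x
  by_cases hx : x ∈ s
  · have hcont : ContinuousAt (s.indicator f) x :=
      (hf.continuousAt (hs.mem_nhds hx)).congr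
        (eventually_of_mem (hs.mem_nhds hx) fun y hy => (indicator_of_mem hy f).symm)
    exact hcont.lowerSemicontinuousAt
  · intro a ha
    rw [indicator_of_notMem hx] at ha
    exact .of_forall fun y => ha.trans_le (indicator_nonneg (fun y _ => hf0 y) y)

section Slope

variable {X : Type*} [MetricSpace X] {h : X → ℝ} {L : NNReal}

noncomputable def slopeQuotient (h : X → ℝ) (x y : X) : ℝ := max (h x - h y) 0 / dist y x

/- The supremum runs over all of `X` (a fixed index type, as `lowerSemicontinuous_ciSup` needs);
since the quotient is nonnegative, the zeros of the indicator do not change it. -/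
noncomputable def localSlope (h : X → ℝ) (r : ℝ) (x : X) : ℝ :=
  ⨆ y, (ball x r ∩ {x}ᶜ).indicator (slopeQuotient h x) y

lemma slopeQuotient_nonneg (x y : X) : 0 ≤ slopeQuotient h x y :=
  div_nonneg (le_max_right _ _) dist_nonneg

lemma LipschitzWith.slopeQuotient_le (hL : LipschitzWith L h) (x y : X) :
    slopeQuotient h x y ≤ L :=
  div_le_of_le_mul₀ dist_nonneg L.coe_nonneg <|
    max_le (by linarith [dist_comm x y ▸ hL.le_add_mul x y]) (by positivity)

lemma sub_le_slopeQuotient_mul_dist (x y : X) : h x - h y ≤ slopeQuotient h x y * dist y x := by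
  rcases eq_or_ne y x with rfl | hyx
  · simp
  rw [slopeQuotient, div_mul_cancel₀ _ (dist_ne_zero.2 hyx)]
  exact le_max_left _ _

lemma LipschitzWith.indicator_slopeQuotient_le (hL : LipschitzWith L h) (s : Set X) (x y : X) :
    s.indicator (slopeQuotient h x) y ≤ L := by
  by_cases hy : y ∈ s
  · simpa [hy] using hL.slopeQuotient_le x y
  · simp [hy]

lemma LipschitzWith.descSlope_eq_iInf_localSlope (hL : LipschitzWith L h) (x : X) :
    descSlope h x = ⨅ n : ℕ, localSlope h (1 / (n + 1)) x :=
  (nhds_basis_ball_inv_nat_succ.inf_principal _).limsup_eq_iInf_iSup_indicator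
    (slopeQuotient_nonneg x) ⟨L, forall_mem_range.2 (hL.slopeQuotient_le x)⟩

lemma LipschitzWith.lowerSemicontinuous_localSlope (hL : LipschitzWith L h) (r : ℝ) :
    LowerSemicontinuous (localSlope h r) := by
  refine lowerSemicontinuous_ciSup
    (fun x => ⟨L, forall_mem_range.2 (hL.indicator_slopeQuotient_le _ x)⟩)
    fun y => ?_
  have hswap : (fun x => (ball x r ∩ {x}ᶜ).indicator (slopeQuotient h x) y) =
      (ball y r ∩ {y}ᶜ).indicator fun x => slopeQuotient h x y := by
    ext x
    have hmem : y ∈ ball x r ∩ {x}ᶜ ↔ x ∈ ball y r ∩ {y}ᶜ := by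
      simp only [mem_inter_iff, mem_ball, mem_compl_iff, mem_singleton_iff, dist_comm, eq_comm]
    by_cases hx : x ∈ ball y r ∩ {y}ᶜ
    · rw [indicator_of_mem hx, indicator_of_mem (hmem.2 hx)]
    · rw [indicator_of_notMem hx, indicator_of_notMem (mt hmem.1 hx)]
  rw [hswap]
  have hquot : ContinuousOn (fun x => slopeQuotient h x y) (ball y r ∩ {y}ᶜ) :=
    ((hL.continuous.sub continuous_const).max continuous_const).continuousOn.div
      (continuous_const.dist continuous_id).continuousOn
      fun x hx => dist_ne_zero.2 fun hyx => hx.2 hyx.symm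
  exact (isOpen_ball.inter isClosed_singleton.isOpen_compl)
    |>.lowerSemicontinuous_indicator_of_continuousOn hquot fun x => slopeQuotient_nonneg x y

lemma LipschitzWith.measurable_descSlope [MeasurableSpace X] [OpensMeasurableSpace X]
    (hL : LipschitzWith L h) : Measurable (descSlope h) := by
  rw [funext hL.descSlope_eq_iInf_localSlope]
  exact .iInf fun n => (hL.lowerSemicontinuous_localSlope _).measurable

lemma LipschitzWith.localSlope_mem_Icc (hL : LipschitzWith L h) (r : ℝ) (x : X) :
    localSlope h r x ∈ Icc 0 (L : ℝ) :=
  ⟨Real.iSup_nonneg (indicator_nonneg fun y _ => slopeQuotient_nonneg x y),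
    Real.iSup_le (hL.indicator_slopeQuotient_le _ x)
      L.coe_nonneg⟩

lemma LipschitzWith.descSlope_mem_Icc (hL : LipschitzWith L h) (x : X) :
    descSlope h x ∈ Icc 0 (L : ℝ) := by
  rw [hL.descSlope_eq_iInf_localSlope]
  exact ⟨le_ciInf fun n => (hL.localSlope_mem_Icc _ x).1,
    (ciInf_le ⟨0, forall_mem_range.2 fun n => (hL.localSlope_mem_Icc _ x).1⟩ 0).trans
      (hL.localSlope_mem_Icc _ x).2⟩

end Slope

section InfConv

variable {X : Type*} [MetricSpace X] {h : X → ℝ} {L : NNReal} {t : ℝ}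

noncomputable def infConv (h : X → ℝ) (t : ℝ) (x : X) : ℝ := ⨅ y, h y + dist x y ^ 2 / t

lemma mul_le_sq_div_add_sq_mul_div_four (a d : ℝ) (ht : 0 < t) :
    a * d ≤ d ^ 2 / t + a ^ 2 * t / 4 := by
  have hsq : 0 ≤ (2 * d - a * t) ^ 2 / (4 * t) := by positivity
  have hexp : (2 * d - a * t) ^ 2 / (4 * t) = d ^ 2 / t + a ^ 2 * t / 4 - a * d := by
    field_simp; ring
  linarith

lemma sub_infConv_le_of_forall_sub_le {c : ℝ} (x : X) (hc : ∀ y, h x - h y ≤ c + dist x y ^ 2 / t) :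
    h x - infConv h t x ≤ c := by
  have : Nonempty X := ⟨x⟩
  have : h x - c ≤ infConv h t x := le_ciInf fun y => by linarith [hc y]
  linarith

lemma LipschitzWith.sub_infConv_le (hL : LipschitzWith L h) (ht : 0 < t) (x : X) :
    h x - infConv h t x ≤ L ^ 2 * t / 4 :=
  sub_infConv_le_of_forall_sub_le x fun y => by
    linarith [hL.le_add_mul x y, mul_le_sq_div_add_sq_mul_div_four L (dist x y) ht]

lemma LipschitzWith.bddBelow_range_infConv (hL : LipschitzWith L h) (ht : 0 < t) (x : X) :
    BddBelow (range fun y => h y + dist x y ^ 2 / t) :=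
  ⟨h x - L ^ 2 * t / 4, forall_mem_range.2 fun y => by
    linarith [hL.le_add_mul x y, mul_le_sq_div_add_sq_mul_div_four L (dist x y) ht]⟩

lemma LipschitzWith.infConv_le_self (hL : LipschitzWith L h) (ht : 0 < t) (x : X) :
    infConv h t x ≤ h x := by
  simpa [infConv] using ciInf_le (hL.bddBelow_range_infConv ht x) x

lemma LipschitzWith.measurable_infConv [MeasurableSpace X] [OpensMeasurableSpace X]
    (hL : LipschitzWith L h) (ht : 0 < t) : Measurable (infConv h t) :=
  (upperSemicontinuous_ciInf (hL.bddBelow_range_infConv ht) fun _ =>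
    (continuous_const.add (((continuous_id.dist continuous_const).pow 2).div_const t))
      |>.upperSemicontinuous).measurable

lemma LipschitzWith.abs_sub_infConv_div_le (hL : LipschitzWith L h) (ht : 0 < t) (x : X) :
    |(h x - infConv h t x) / t| ≤ L ^ 2 / 4 := by
  rw [abs_of_nonneg (div_nonneg (sub_nonneg.2 (hL.infConv_le_self ht x)) ht.le),
    div_le_iff₀ ht]
  linarith [hL.sub_infConv_le ht x]

lemma LipschitzWith.eventually_sub_infConv_le (hL : LipschitzWith L h) {x : X} {a : ℝ}
    (ha : descSlope h x < a) : ∀ᶠ t in 𝓝[>] 0, h x - infConv h t x ≤ a ^ 2 * t / 4 := by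
  obtain ⟨δ, hδ, hnear⟩ := Metric.mem_nhdsWithin_iff.1 <| eventually_lt_of_limsup_lt ha
    ⟨L, eventually_map.2 (.of_forall (hL.slopeQuotient_le x))⟩
  filter_upwards [Ioo_mem_nhdsGT (show 0 < δ / (L + 1) by positivity)] with t ⟨ht, htδ⟩
  refine sub_infConv_le_of_forall_sub_le x fun y => ?_
  rw [dist_comm x y]
  rcases lt_or_ge (dist y x) δ with hy | hy
  · have hslope : h x - h y ≤ a * dist y x := by
      rcases eq_or_ne y x with rfl | hyx
      · simp
      · exact (sub_le_slopeQuotient_mul_dist x y).trans <|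
          mul_le_mul_of_nonneg_right (hnear ⟨mem_ball.2 hy, hyx⟩).le dist_nonneg
    linarith [mul_le_sq_div_add_sq_mul_div_four a (dist y x) ht]
  · have hLt : L * t ≤ dist y x := by
      rw [lt_div_iff₀ (by positivity)] at htδ
      nlinarith [L.coe_nonneg]
    have hfar : L * dist y x ≤ dist y x ^ 2 / t := by
      rw [le_div_iff₀ ht]
      nlinarith [dist_nonneg (x := y) (y := x)]
    nlinarith [dist_comm x y ▸ hL.le_add_mul x y, sq_nonneg a]

lemma LipschitzWith.limsup_sub_infConv_div_le (hL : LipschitzWith L h) (x : X) :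
    limsup (fun t => (h x - infConv h t x) / t) (𝓝[>] 0) ≤ descSlope h x ^ 2 / 4 := by
  have hbound (a : ℝ) (ha : descSlope h x < a) :
      limsup (fun t => (h x - infConv h t x) / t) (𝓝[>] 0) ≤ a ^ 2 / 4 := by
    refine limsup_le_of_le (isCoboundedUnder_le_of_eventually_le _ (x := 0) ?_) ?_
    · filter_upwards [self_mem_nhdsWithin] with t (ht : 0 < t)
      exact div_nonneg (sub_nonneg.2 (hL.infConv_le_self ht x)) ht.le
    · filter_upwards [hL.eventually_sub_infConv_le ha, self_mem_nhdsWithin] with t hle (ht : 0 < t)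
      rw [div_le_iff₀ ht]
      linarith
  have hcont : Tendsto (fun a : ℝ => a ^ 2 / 4) (𝓝[>] (descSlope h x))
      (𝓝 (descSlope h x ^ 2 / 4)) :=
    ((continuous_pow 2).div_const 4).continuousWithinAt
  exact ge_of_tendsto hcont (eventually_mem_nhdsWithin.mono hbound)

end InfConv

theorem Filter.tendsto_max_sub_zero_of_limsup_le {ι : Type*} {l : Filter ι} {u : ι → ℝ}
    {c : ℝ} (hu : IsBoundedUnder (· ≤ ·) l u) (hc : limsup u l ≤ c) :
    Tendsto (fun i => max (u i - c) 0) l (𝓝 0) := by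
  refine tendsto_order.2 ⟨fun a ha => .of_forall fun i => ha.trans_le (le_max_right _ _),
    fun a ha => ?_⟩
  filter_upwards [eventually_lt_of_limsup_lt (hc.trans_lt (lt_add_of_pos_right c ha)) hu]
    with i hi
  exact max_lt (by linarith) ha

theorem MeasureTheory.limsup_integral_le_integral_of_limsup_le {α ι : Type*} [MeasurableSpace α]
    {μ : Measure α} [IsFiniteMeasure μ] {l : Filter ι} [l.IsCountablyGenerated] [l.NeBot]
    {f : ι → α → ℝ} {g : α → ℝ} {C : ℝ} (hf_meas : ∀ᶠ i in l, AEStronglyMeasurable (f i) μ)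
    (hf_bound : ∀ᶠ i in l, ∀ x, |f i x| ≤ C) (hg : Integrable g μ)
    (hlim : ∀ᵐ x ∂μ, limsup (fun i => f i x) l ≤ g x) :
    limsup (fun i => ∫ x, f i x ∂μ) l ≤ ∫ x, g x ∂μ := by
  set excess : ι → α → ℝ := fun i x => max (f i x - g x) 0
  have hexcess_bound : ∀ᶠ i in l, ∀ x, ‖excess i x‖ ≤ C + |g x| := by
    filter_upwards [hf_bound] with i hi x
    rw [Real.norm_eq_abs, abs_of_nonneg (le_max_right _ _)]
    exact max_le (by linarith [hi x, le_abs_self (f i x), neg_abs_le (g x)])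
      ((abs_nonneg _).trans (by linarith [hi x, abs_nonneg (f i x)]))
  have hexcess_meas : ∀ᶠ i in l, AEStronglyMeasurable (excess i) μ := by
    filter_upwards [hf_meas] with i hi
    exact (hi.sub hg.1).sup aestronglyMeasurable_const
  have hexcess_int : ∀ᶠ i in l, Integrable (excess i) μ := by
    filter_upwards [hexcess_meas, hexcess_bound] with i hm hb
    exact ((integrable_const C).add hg.abs).mono' hm (.of_forall hb)
  have hexcess_tendsto : Tendsto (fun i => ∫ x, excess i x ∂μ) l (𝓝 0) := by
    rw [← integral_zero α ℝ]
    refine tendsto_integral_filter_of_dominated_convergence (fun x => C + |g x|) hexcess_meas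
      (hexcess_bound.mono fun i hi => .of_forall hi) ((integrable_const C).add hg.abs) ?_
    filter_upwards [hlim] with x hx
    exact tendsto_max_sub_zero_of_limsup_le
      ⟨C, eventually_map.2 (hf_bound.mono fun i hi => (le_abs_self _).trans (hi x))⟩ hx
  have hle : ∀ᶠ i in l, ∫ x, f i x ∂μ ≤ ∫ x, g x ∂μ + ∫ x, excess i x ∂μ := by
    filter_upwards [hf_meas, hf_bound, hexcess_int] with i hm hb hi
    rw [← integral_add hg hi]
    exact integral_mono (.of_bound hm C (.of_forall hb)) (hg.add hi)
      fun x => by linarith [le_max_left (f i x - g x) 0]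
  have hlower : ∀ᶠ i in l, -(C * μ.real univ) ≤ ∫ x, f i x ∂μ := by
    filter_upwards [hf_bound] with i hi
    exact neg_le_of_abs_le (norm_integral_le_of_norm_le_const (f := f i) (.of_forall hi))
  calc limsup (fun i => ∫ x, f i x ∂μ) l
      ≤ limsup (fun i => ∫ x, g x ∂μ + ∫ x, excess i x ∂μ) l :=
        limsup_le_limsup hle (isCoboundedUnder_le_of_eventually_le l hlower)
          (tendsto_const_nhds.add hexcess_tendsto).isBoundedUnder_le
    _ = ∫ x, g x ∂μ := by simpa using (tendsto_const_nhds.add hexcess_tendsto).limsup_eq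

/-- For Lipschitz `h` and a Borel probability measure `ν`,
`limsup_{t→0⁺} (1/t) ∫ (h - Q_t h) dν ≤ (1/4) ∫ |∇⁻h|² dν`. -/
theorem limsup_integral_infConv_le {X : Type*} [MetricSpace X] [MeasurableSpace X]
    [OpensMeasurableSpace X] (h : X → ℝ) (L : NNReal) (hL : LipschitzWith L h)
    (ν : Measure X) [IsProbabilityMeasure ν] :
    limsup (fun t : ℝ => (1 / t) * ∫ x, (h x - ⨅ y : X, h y + dist x y ^ 2 / t) ∂ν)
        (nhdsWithin 0 (Ioi 0)) ≤ (1 / 4) * ∫ x, (descSlope h x) ^ 2 ∂ν := by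
  have hslope_int : Integrable (fun x => descSlope h x ^ 2 / 4) ν := by
    refine .of_bound ((hL.measurable_descSlope.pow_const 2).div_const 4).aestronglyMeasurable
      (L ^ 2 / 4) (.of_forall fun x => ?_)
    obtain ⟨h0, hle⟩ := hL.descSlope_mem_Icc x
    rw [Real.norm_eq_abs, abs_of_nonneg (by positivity)]
    gcongr
  have hfatou := limsup_integral_le_integral_of_limsup_le (μ := ν) (l := 𝓝[>] 0)
    (f := fun t x => (h x - infConv h t x) / t) (C := L ^ 2 / 4)
    (eventually_mem_nhdsWithin.mono fun t (ht : 0 < t) =>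
      ((hL.continuous.measurable.sub (hL.measurable_infConv ht)).div_const t).aestronglyMeasurable)
    (eventually_mem_nhdsWithin.mono fun t ht => hL.abs_sub_infConv_div_le ht)
    hslope_int (.of_forall hL.limsup_sub_infConv_div_le)
  simp only [integral_div, infConv] at hfatou
  simpa only [one_div_mul_eq_div, one_div, inv_mul_eq_div] using hfatou
end

section
/- The square root of θ, i.e. the function t ↦ √(θ(t)) with θ(t) = t² on [0,1] and θ(t) = 2t - 1 on [1,∞), is subadditive on [0,∞); consequently, for any metric d on X, the function d̃(x,y) = √(θ(a·d(x,y))) defines a metric on X for every a > 0. -/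
/-!
Write `f = √θ`. On `[0, 1]` we have `f t = t`, and on `[1, ∞)` we have `f t ≥ 1` and
`f t ^ 2 = 2 t - 1`. If `s, t ≤ 1`, then `f (s + t) ≤ s + t` because `θ u ≤ u ^ 2`. Otherwise,
say `t ≥ 1`, and squaring reduces `f (s + t) ≤ f s + f t` to `2 s ≤ θ s + 2 f s f t`, which
follows from `f t ≥ 1` and `2 s ≤ θ s + 2 f s`. The triangle inequality for `f (a d)` then
follows from that of `d`, because `f` is monotone as well as subadditive; and `f` vanishes only
at `0`.
-/

open Set

/-- Talagrand's cost function: `θ t = t²` for `t ≤ 1` and `θ t = 2t - 1` for `t ≥ 1`. -/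
noncomputable def theta (t : ℝ) : ℝ := if t ≤ 1 then t ^ 2 else 2 * t - 1

lemma theta_nonneg (t : ℝ) : 0 ≤ theta t := by
  unfold theta; split <;> nlinarith

lemma theta_le_sq (t : ℝ) : theta t ≤ t ^ 2 := by
  unfold theta; split <;> nlinarith [sq_nonneg (t - 1)]

lemma theta_of_one_le {t : ℝ} (ht : 1 ≤ t) : theta t = 2 * t - 1 := by
  unfold theta; split <;> nlinarith

lemma theta_eq_zero_iff {t : ℝ} : theta t = 0 ↔ t = 0 := by
  unfold theta; split
  · exact pow_eq_zero_iff two_ne_zero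
  · constructor <;> intro h <;> linarith

lemma theta_monotoneOn : MonotoneOn theta (Ici 0) := by
  intro u hu v _ huv
  unfold theta; split <;> split <;> nlinarith [mem_Ici.mp hu]

lemma sqrt_theta_of_le_one {t : ℝ} (h₀ : 0 ≤ t) (h₁ : t ≤ 1) : √(theta t) = t := by
  rw [theta, if_pos h₁, Real.sqrt_sq h₀]

lemma one_le_sqrt_theta {t : ℝ} (ht : 1 ≤ t) : 1 ≤ √(theta t) := by
  rw [Real.le_sqrt zero_le_one (theta_nonneg t), theta_of_one_le ht]
  linarith

lemma two_mul_le_theta_add_two_mul_sqrt_theta (s : ℝ) : 2 * s ≤ theta s + 2 * √(theta s) := by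
  rcases le_or_gt s 0 with hs | hs
  · linarith [theta_nonneg s, Real.sqrt_nonneg (theta s)]
  rcases le_or_gt s 1 with hs₁ | hs₁
  · rw [sqrt_theta_of_le_one hs.le hs₁]
    linarith [theta_nonneg s]
  · linarith [theta_of_one_le hs₁.le, one_le_sqrt_theta hs₁.le]

lemma sqrt_theta_add_le_of_one_le {s t : ℝ} (hs : 0 ≤ s) (ht : 1 ≤ t) :
    √(theta (s + t)) ≤ √(theta s) + √(theta t) := by
  rw [Real.sqrt_le_left (by positivity), add_sq, Real.sq_sqrt (theta_nonneg s),
    Real.sq_sqrt (theta_nonneg t), theta_of_one_le (by linarith)]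
  nlinarith [two_mul_le_theta_add_two_mul_sqrt_theta s, theta_of_one_le ht,
    one_le_sqrt_theta ht, Real.sqrt_nonneg (theta s)]

theorem sqrt_theta_add_le {s t : ℝ} (hs : 0 ≤ s) (ht : 0 ≤ t) :
    √(theta (s + t)) ≤ √(theta s) + √(theta t) := by
  rcases le_or_gt 1 t with ht₁ | ht₁
  · exact sqrt_theta_add_le_of_one_le hs ht₁
  rcases le_or_gt 1 s with hs₁ | hs₁
  · rw [add_comm s, add_comm (√(theta s))]
    exact sqrt_theta_add_le_of_one_le ht hs₁
  calc √(theta (s + t)) ≤ s + t := by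
        rw [Real.sqrt_le_left (by positivity)]
        exact theta_le_sq _
    _ = √(theta s) + √(theta t) := by
        rw [sqrt_theta_of_le_one hs hs₁.le, sqrt_theta_of_le_one ht ht₁.le]

theorem dist_triangle_of_monotoneOn_of_subadditive {X : Type*} [PseudoMetricSpace X]
    {f : ℝ → ℝ} (hf : MonotoneOn f (Ici 0))
    (hsub : ∀ s t : ℝ, 0 ≤ s → 0 ≤ t → f (s + t) ≤ f s + f t) (x y z : X) :
    f (dist x z) ≤ f (dist x y) + f (dist y z) :=
  (hf dist_nonneg (add_nonneg dist_nonneg dist_nonneg) (dist_triangle x y z)).trans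
    (hsub _ _ dist_nonneg dist_nonneg)

/-- `t ↦ √(θ t)` is subadditive on `[0,∞)`; consequently, for any metric
space `(X,d)` and any `a > 0`, `d̃(x,y) = √(θ(a d(x,y)))` defines a metric on `X`
(point separation, symmetry and the triangle inequality). -/
theorem sqrt_theta_subadditive_metric {X : Type*} [MetricSpace X] (a : ℝ) (ha : 0 < a) :
    (∀ s t : ℝ, 0 ≤ s → 0 ≤ t →
        Real.sqrt (theta (s + t)) ≤ Real.sqrt (theta s) + Real.sqrt (theta t)) ∧
    (∀ x y : X, Real.sqrt (theta (a * dist x y)) = 0 ↔ x = y) ∧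
    (∀ x y : X, Real.sqrt (theta (a * dist x y)) = Real.sqrt (theta (a * dist y x))) ∧
    (∀ x y z : X, Real.sqrt (theta (a * dist x z)) ≤
        Real.sqrt (theta (a * dist x y)) + Real.sqrt (theta (a * dist y z))) := by
  refine ⟨fun s t hs ht => sqrt_theta_add_le hs ht, fun x y => ?_,
    fun x y => by rw [dist_comm], ?_⟩
  · rw [Real.sqrt_eq_zero (theta_nonneg _), theta_eq_zero_iff, mul_eq_zero, dist_eq_zero]
    simp [ha.ne']
  · have hmono : MonotoneOn (fun t => √(theta (a * t))) (Ici 0) := fun u hu v hv huv =>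
      Real.sqrt_le_sqrt <| theta_monotoneOn (mul_nonneg ha.le hu) (mul_nonneg ha.le hv)
        (mul_le_mul_of_nonneg_left huv ha.le)
    refine dist_triangle_of_monotoneOn_of_subadditive hmono fun s t hs ht => ?_
    simpa only [mul_add] using sqrt_theta_add_le (mul_nonneg ha.le hs) (mul_nonneg ha.le ht)
end

section
/- Let μ be a probability measure on a metric space and f a bounded measurable function with Z(s) = log ∫ e^{sf} dμ. If λ(∫ e^{2sf}dμ - (∫ e^{sf}dμ)²) ≤ s² ∫ e^{2sf} dμ for all 0 ≤ s ≤ √λ, then ∫ e^{s(f - ∫f dμ)} dμ ≤ exp( (s/√λ) ∫₀^{s/√λ} (-log(1 - v²))/v² dv ) for all 0 < s < √λ. -/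
/-!
Put `Λ(v) = log ∫ e^{√λ v f} dμ`. The hypothesis at `s = √λ v` says
`Λ(2v) ≤ 2Λ(v) - log(1 - v²)`, so halving `t` repeatedly gives
`Λ(t) ≤ 2ⁿ Λ(t/2ⁿ) + ∑_{k<n} 2ᵏ (-log(1 - (t/2ᵏ⁺¹)²))`.
As `n → ∞` the first term tends to `t Λ'(0) = s ∫ f dμ`. Since `-log(1 - v²)` increases and
`∫ v⁻² dv` over `[t/2ᵏ⁺¹, t/2ᵏ]` equals `2ᵏ/t`, the `k`-th summand is at most `t` times the integral
of `-log(1 - v²)/v²` over that interval, and these intervals tile `(0, t]`.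
-/

open MeasureTheory ProbabilityTheory Real Set Filter Topology

section Doubling

variable {Λ G : ℝ → ℝ} {t : ℝ}

lemma le_pow_two_mul_add_sum_of_doubling (ht : 0 ≤ t)
    (hdouble : ∀ v ∈ Icc 0 (t / 2), Λ (2 * v) ≤ 2 * Λ v + G v) (n : ℕ) :
    Λ t ≤ 2 ^ n * Λ (t / 2 ^ n) + ∑ k ∈ Finset.range n, 2 ^ k * G (t / 2 ^ (k + 1)) := by
  induction n with
  | zero => simp
  | succ n ih =>
    have hmem : t / 2 ^ (n + 1) ∈ Icc 0 (t / 2) :=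
      ⟨by positivity, div_le_div_of_nonneg_left ht two_pos
        (le_self_pow₀ one_le_two n.succ_ne_zero)⟩
    have hstep := hdouble _ hmem
    rw [show 2 * (t / 2 ^ (n + 1)) = t / 2 ^ n by rw [pow_succ]; field_simp] at hstep
    calc Λ t ≤ 2 ^ n * Λ (t / 2 ^ n) + ∑ k ∈ Finset.range n, 2 ^ k * G (t / 2 ^ (k + 1)) := ih
      _ ≤ 2 ^ n * (2 * Λ (t / 2 ^ (n + 1)) + G (t / 2 ^ (n + 1)))
          + ∑ k ∈ Finset.range n, 2 ^ k * G (t / 2 ^ (k + 1)) := by gcongr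
      _ = _ := by rw [Finset.sum_range_succ, pow_succ]; ring

lemma le_mul_add_of_doubling {d B : ℝ} (hΛ : HasDerivAt Λ d 0) (hΛ0 : Λ 0 = 0) (ht : 0 < t)
    (hdouble : ∀ v ∈ Icc 0 (t / 2), Λ (2 * v) ≤ 2 * Λ v + G v)
    (hB : ∀ n : ℕ, ∑ k ∈ Finset.range n, 2 ^ k * G (t / 2 ^ (k + 1)) ≤ B) :
    Λ t ≤ t * d + B := by
  have hscale : Tendsto (fun n : ℕ => t / 2 ^ n) atTop (𝓝[>] 0) :=
    tendsto_nhdsWithin_iff.2 ⟨tendsto_const_nhds.div_atTop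
      (tendsto_pow_atTop_atTop_of_one_lt one_lt_two),
      .of_forall fun n => show 0 < t / 2 ^ n by positivity⟩
  have hlim : Tendsto (fun n : ℕ => 2 ^ n * Λ (t / 2 ^ n)) atTop (𝓝 (t * d)) := by
    refine ((hΛ.tendsto_slope_zero_right.comp hscale).const_mul t).congr fun n => ?_
    simp only [Function.comp_apply, zero_add, hΛ0, sub_zero, smul_eq_mul]
    field_simp
  exact ge_of_tendsto' (hlim.add_const B) fun n =>
    (le_pow_two_mul_add_sum_of_doubling ht.le hdouble n).trans (by gcongr; exact hB n)

end Doubling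

section SumLeIntegral

variable {G : ℝ → ℝ}

lemma integral_inv_sq {a b : ℝ} (h0 : (0 : ℝ) ∉ uIcc a b) :
    ∫ v in a..b, (v ^ 2)⁻¹ = a⁻¹ - b⁻¹ := by
  have h := integral_zpow (n := -2) (Or.inr ⟨by norm_num, h0⟩)
  norm_num at h
  rw [h]
  ring

lemma mul_inv_sub_inv_le_integral_div_sq {a b : ℝ} (ha : 0 < a) (hab : a ≤ b)
    (hG : MonotoneOn G (Icc a b)) (hint : IntervalIntegrable (fun v => G v / v ^ 2) volume a b) :
    G a * (a⁻¹ - b⁻¹) ≤ ∫ v in a..b, G v / v ^ 2 := by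
  have hpos : ∀ v ∈ uIcc a b, 0 < v := by
    rw [uIcc_of_le hab]
    exact fun v hv => ha.trans_le hv.1
  have hinv : IntervalIntegrable (fun v : ℝ => G a * (v ^ 2)⁻¹) volume a b :=
    ((continuousOn_pow 2).inv₀ fun v hv => (pow_pos (hpos v hv) 2).ne').intervalIntegrable.const_mul _
  rw [← integral_inv_sq fun h => (hpos 0 h).false, ← intervalIntegral.integral_const_mul]
  refine intervalIntegral.integral_mono_on hab hinv hint fun v hv => ?_
  rw [div_eq_mul_inv]
  gcongr
  exact hG (left_mem_Icc.2 hab) hv hv.1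

lemma sum_integral_halvings {g : ℝ → ℝ} {t : ℝ} (ht : 0 ≤ t)
    (hint : IntervalIntegrable g volume 0 t) (n : ℕ) :
    ∑ k ∈ Finset.range n, ∫ v in t / 2 ^ (k + 1)..t / 2 ^ k, g v = ∫ v in t / 2 ^ n..t, g v := by
  have hmem (k : ℕ) : t / 2 ^ k ∈ uIcc 0 t := by
    rw [uIcc_of_le ht]
    exact ⟨by positivity, div_le_self ht (one_le_pow₀ one_le_two)⟩
  have h := intervalIntegral.sum_integral_adjacent_intervals (a := fun k => t / 2 ^ k) (n := n)
    fun k _ => hint.mono_set (uIcc_subset_uIcc (hmem k) (hmem (k + 1)))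
  rw [Finset.sum_congr rfl fun k _ => intervalIntegral.integral_symm (t / 2 ^ k) (t / 2 ^ (k + 1)),
    Finset.sum_neg_distrib, h, ← intervalIntegral.integral_symm]
  simp

lemma sum_pow_two_mul_le_mul_integral_div_sq {t : ℝ} (ht : 0 < t) (hG : MonotoneOn G (Icc 0 t))
    (hG0 : 0 ≤ G 0) (hint : IntervalIntegrable (fun v => G v / v ^ 2) volume 0 t) (n : ℕ) :
    ∑ k ∈ Finset.range n, 2 ^ k * G (t / 2 ^ (k + 1)) ≤ t * ∫ v in (0 : ℝ)..t, G v / v ^ 2 := by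
  have hmem (k : ℕ) : t / 2 ^ k ∈ Icc 0 t :=
    ⟨by positivity, div_le_self ht.le (one_le_pow₀ one_le_two)⟩
  have hint_on {b c : ℝ} (hb : b ∈ Icc 0 t) (hc : c ∈ Icc 0 t) :
      IntervalIntegrable (fun v => G v / v ^ 2) volume b c :=
    hint.mono_set (uIcc_subset_uIcc (by rwa [uIcc_of_le ht.le]) (by rwa [uIcc_of_le ht.le]))
  have hterm (k : ℕ) :
      2 ^ k * G (t / 2 ^ (k + 1)) ≤ t * ∫ v in t / 2 ^ (k + 1)..t / 2 ^ k, G v / v ^ 2 := by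
    have h := mul_inv_sub_inv_le_integral_div_sq (by positivity)
      (div_le_div_of_nonneg_left ht.le (by positivity) (pow_le_pow_right₀ one_le_two k.le_succ))
      (hG.mono (Icc_subset_Icc (hmem _).1 (hmem _).2)) (hint_on (hmem (k + 1)) (hmem k))
    rw [show (t / 2 ^ (k + 1))⁻¹ - (t / 2 ^ k)⁻¹ = 2 ^ k / t by rw [pow_succ]; field_simp; ring]
      at h
    calc 2 ^ k * G (t / 2 ^ (k + 1)) = t * (G (t / 2 ^ (k + 1)) * (2 ^ k / t)) := by field_simp
      _ ≤ _ := by gcongr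
  have hhead : 0 ≤ ∫ v in (0 : ℝ)..t / 2 ^ n, G v / v ^ 2 :=
    intervalIntegral.integral_nonneg (hmem n).1 fun v hv => div_nonneg
      (hG0.trans (hG (left_mem_Icc.2 ht.le) ⟨hv.1, hv.2.trans (hmem n).2⟩ hv.1)) (sq_nonneg v)
  calc ∑ k ∈ Finset.range n, 2 ^ k * G (t / 2 ^ (k + 1))
      ≤ ∑ k ∈ Finset.range n, t * ∫ v in t / 2 ^ (k + 1)..t / 2 ^ k, G v / v ^ 2 :=
        Finset.sum_le_sum fun k _ => hterm k
    _ = t * ∫ v in t / 2 ^ n..t, G v / v ^ 2 := by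
        rw [← Finset.mul_sum, sum_integral_halvings ht.le hint]
    _ ≤ t * ∫ v in (0 : ℝ)..t, G v / v ^ 2 := by
        rw [← intervalIntegral.integral_interval_sub_left hint (hint_on (left_mem_Icc.2 ht.le) (hmem n))]
        gcongr
        linarith

end SumLeIntegral

lemma monotoneOn_neg_log_one_sub_sq : MonotoneOn (fun v : ℝ => -log (1 - v ^ 2)) (Ico 0 1) := by
  intro a ha b hb hab
  have hab2 : a ^ 2 ≤ b ^ 2 := pow_le_pow_left₀ ha.1 hab 2
  exact neg_le_neg (log_le_log (by nlinarith [hb.1, hb.2]) (by linarith))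

lemma neg_log_one_sub_sq_div_sq_le {v : ℝ} (hv : v ^ 2 < 1) :
    -log (1 - v ^ 2) / v ^ 2 ≤ (1 - v ^ 2)⁻¹ := by
  have hpos : 0 < 1 - v ^ 2 := by linarith
  rcases eq_or_ne v 0 with rfl | hv0
  · simp
  have hlog := one_sub_inv_le_log_of_pos hpos
  rw [div_le_iff₀ (by positivity)]
  have : (1 - v ^ 2)⁻¹ - 1 = (1 - v ^ 2)⁻¹ * v ^ 2 := by field_simp; ring
  linarith

lemma intervalIntegrable_neg_log_one_sub_sq_div_sq {t : ℝ} (ht0 : 0 ≤ t) (ht1 : t < 1) :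
    IntervalIntegrable (fun v : ℝ => -log (1 - v ^ 2) / v ^ 2) volume 0 t := by
  rw [intervalIntegrable_iff_integrableOn_Ioc_of_le ht0]
  refine Measure.integrableOn_of_bounded (M := (1 - t ^ 2)⁻¹) measure_Ioc_lt_top.ne
    (by fun_prop : Measurable fun v : ℝ => -log (1 - v ^ 2) / v ^ 2).aestronglyMeasurable ?_
  filter_upwards [ae_restrict_mem measurableSet_Ioc] with v ⟨hv0, hvt⟩
  have hvt2 : v ^ 2 ≤ t ^ 2 := pow_le_pow_left₀ hv0.le hvt 2
  have hv1 : v ^ 2 < 1 := by nlinarith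
  have hnonneg : 0 ≤ -log (1 - v ^ 2) / v ^ 2 :=
    div_nonneg (neg_nonneg.2 (log_nonpos (by linarith) (by nlinarith))) (sq_nonneg v)
  rw [Real.norm_eq_abs, abs_of_nonneg hnonneg]
  exact (neg_log_one_sub_sq_div_sq_le hv1).trans (by gcongr; nlinarith)

section CGF

variable {Ω : Type*} {mΩ : MeasurableSpace Ω} {μ : Measure Ω} {X : Ω → ℝ}

lemma integrableExpSet_eq_univ_of_abs_le [IsFiniteMeasure μ] {C : ℝ} (hX : AEMeasurable X μ)
    (hb : ∀ᵐ ω ∂μ, |X ω| ≤ C) : integrableExpSet X μ = univ :=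
  eq_univ_of_forall fun _ => integrable_exp_mul_of_mem_Icc hX (hb.mono fun _ h => abs_le.1 h)

lemma hasDerivAt_cgf_const_mul_zero [IsProbabilityMeasure μ]
    (h : 0 ∈ interior (integrableExpSet X μ)) (r : ℝ) :
    HasDerivAt (fun v => cgf X μ (r * v)) (μ[X] * r) 0 := by
  have hderiv := (analyticAt_cgf h).differentiableAt.hasDerivAt
  rw [deriv_cgf_zero h, probReal_univ, div_one] at hderiv
  have hcomp := hderiv.comp_of_eq 0 ((hasDerivAt_id' 0).const_mul r) (mul_zero r).symm
  rwa [mul_one] at hcomp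

lemma cgf_sqrt_mul_two_mul_le {lam v : ℝ} (hlam : 0 < lam) (hv : v ^ 2 < 1)
    (hmgf : 0 < mgf X μ (2 * (√lam * v)))
    (H : lam * (mgf X μ (2 * (√lam * v)) - mgf X μ (√lam * v) ^ 2) ≤
      (√lam * v) ^ 2 * mgf X μ (2 * (√lam * v))) :
    cgf X μ (√lam * (2 * v)) ≤ 2 * cgf X μ (√lam * v) - log (1 - v ^ 2) := by
  have hq : 0 < 1 - v ^ 2 := by linarith
  rw [mul_pow, sq_sqrt hlam.le] at H
  have hbound : (1 - v ^ 2) * mgf X μ (2 * (√lam * v)) ≤ mgf X μ (√lam * v) ^ 2 := by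
    nlinarith
  have hlog := log_le_log (mul_pos hq hmgf) hbound
  rw [log_mul hq.ne' hmgf.ne', log_pow] at hlog
  rw [mul_left_comm]
  simp only [cgf]
  push_cast at hlog
  linarith

lemma integral_exp_mul_sub_eq_exp_cgf [NeZero μ] {s : ℝ}
    (hint : Integrable (fun ω => exp (s * X ω)) μ) (c : ℝ) :
    ∫ ω, exp (s * (X ω - c)) ∂μ = exp (cgf X μ s - s * c) := by
  have hshift := mgf_add_const (X := X) (μ := μ) (t := s) (-c)
  simp only [← sub_eq_add_neg] at hshift
  rw [← mgf, hshift, ← exp_cgf hint, ← exp_add]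
  ring_nf

end CGF

/-- core of the Herbst argument: if
`λ (∫ e^{2sf} - (∫ e^{sf})²) ≤ s² ∫ e^{2sf}` for all `0 ≤ s ≤ √λ`, then for all
`0 < s < √λ`,
`∫ e^{s(f - ∫ f)} dμ ≤ exp((s/√λ) ∫₀^{s/√λ} (-log(1 - v²))/v² dv)`. -/
theorem herbst_mgf_bound {X : Type*} [MeasurableSpace X] (μ : Measure X)
    [IsProbabilityMeasure μ] (f : X → ℝ) (hf : Measurable f)
    (C : ℝ) (hb : ∀ x, |f x| ≤ C) (lam : ℝ) (hlam : 0 < lam)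
    (H : ∀ s : ℝ, 0 ≤ s → s ≤ Real.sqrt lam →
      lam * ((∫ x, Real.exp (2 * s * f x) ∂μ) - (∫ x, Real.exp (s * f x) ∂μ) ^ 2) ≤
        s ^ 2 * ∫ x, Real.exp (2 * s * f x) ∂μ) :
    ∀ s : ℝ, 0 < s → s < Real.sqrt lam →
      ∫ x, Real.exp (s * (f x - ∫ y, f y ∂μ)) ∂μ ≤
        Real.exp ((s / Real.sqrt lam) *
          ∫ v in (0:ℝ)..(s / Real.sqrt lam), (-Real.log (1 - v ^ 2)) / v ^ 2) := by
  intro s hs hsr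
  set r := √lam
  set t := s / r
  have hr : 0 < r := sqrt_pos.2 hlam
  have ht0 : 0 < t := div_pos hs hr
  have ht1 : t < 1 := (div_lt_one hr).2 hsr
  have hexp := integrableExpSet_eq_univ_of_abs_le hf.aemeasurable (ae_of_all μ hb)
  have hint := eq_univ_iff_forall.1 hexp
  have hdouble (v : ℝ) (hv : v ∈ Icc 0 (t / 2)) :
      cgf f μ (r * (2 * v)) ≤ 2 * cgf f μ (r * v) + -log (1 - v ^ 2) :=
    (cgf_sqrt_mul_two_mul_le hlam (by nlinarith [hv.1, hv.2]) (mgf_pos (hint _))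
      (H _ (mul_nonneg hr.le hv.1) (mul_le_of_le_one_right hr.le (by linarith [hv.2])))).trans_eq
      (sub_eq_add_neg _ _)
  have hcgf := le_mul_add_of_doubling
    (hasDerivAt_cgf_const_mul_zero (by simp [hexp]) r) (by simp [cgf_zero]) ht0 hdouble
    (sum_pow_two_mul_le_mul_integral_div_sq ht0
      (monotoneOn_neg_log_one_sub_sq.mono (Icc_subset_Ico_right ht1)) (by simp)
      (intervalIntegrable_neg_log_one_sub_sq_div_sq ht0.le ht1))
  have hrt : r * t = s := mul_div_cancel₀ s hr.ne'
  rw [integral_exp_mul_sub_eq_exp_cgf (hint s), exp_le_exp, ← hrt]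
  linarith
end

section
/- Let μ be a Borel probability measure on a metric space, p ≥ 1, and suppose there exist r₀ > 0 and a₀ ∈ [0, 1/2) such that for every Borel set A ⊆ X with μ(A) ≥ 1/2 one has μ(A_{r₀}) ≥ 1 - a₀, where A_r = {x : d(x,A) ≤ r}. Suppose further this is stable under taking enlargements and products (i.e., the hypothesis of Proposition 'Cor Tal 2' with 𝒜ₙ = all Borel sets). Then for every γ ∈ (-log(1-a₀)/log 2, 1) there exists c ∈ [1/2, 1) (depending only on γ and a₀) such that for every Borel set A with μ(A) ≥ c, μ(A_r) ≥ 1 - ((1-c)/γ)·γ^{r/r₀} for all r ≥ 0. -/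
open MeasureTheory Set

/-- The `ℓ_p` product distance on `Xⁿ`: `d_p(x,y) = (∑ᵢ d(xᵢ,yᵢ)^p)^{1/p}`. -/
noncomputable def dlp {X : Type*} [MetricSpace X] {n : ℕ} (p : ℝ) (x y : Fin n → X) : ℝ :=
  (∑ i, dist (x i) (y i) ^ p) ^ (1 / p)

/-- The `ℓ_p` enlargement `A_{r,p} = {x : d_p(x,A) ≤ r}` of a set `A ⊆ Xⁿ`
(with `d_p(x,A) = inf_{a ∈ A} d_p(x,a)`). -/
noncomputable def enl {X : Type*} [MetricSpace X] {n : ℕ} (p r : ℝ)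
    (A : Set (Fin n → X)) : Set (Fin n → X) :=
  {z | sInf ((fun a => dlp p z a) '' A) ≤ r}

/-!
Talagrand's tensorisation trick. If `μ(A) ≥ 1 - v` with `v` small, then `μⁿ(Aⁿ) ≥ (1 - v)ⁿ ≥ 1/2`
for `n ≈ log 2 / v`. Since the `ℓ_p`-enlargement of `Aⁿ` lies in `(A_{r₀})ⁿ`, the hypothesis
gives `μ(A_{r₀})ⁿ ≥ 1 - a₀`, i.e. `μ(A_{r₀}) ≥ (1 - a₀)^{1/n} ≈ 1 - γ v` as soon as
`γ > -log(1 - a₀) / log 2`. Iterating with `(A_s)_t ⊆ A_{s+t}` makes the missing mass decay like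
`γ^{r/r₀}`.
-/

open Metric Real
open scoped ENNReal

section Real

lemma half_le_one_sub_pow {v : ℝ} {n : ℕ} (hv : v < 1) (hn : n * v ≤ log 2 * (1 - v)) :
    1 / 2 ≤ (1 - v) ^ n := by
  have h1v : 0 < 1 - v := sub_pos.2 hv
  have hlog : -log 2 ≤ n * log (1 - v) := by
    have hinv : 1 - (1 - v)⁻¹ = -(v / (1 - v)) := by field_simp; ring
    have hnv : n * (v / (1 - v)) ≤ log 2 := by
      rw [← mul_div_assoc, div_le_iff₀ h1v]; exact hn
    nlinarith [one_sub_inv_le_log_of_pos h1v, (n.cast_nonneg : (0 : ℝ) ≤ n)]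
  calc (1 / 2 : ℝ) = exp (-log 2) := by rw [exp_neg, exp_log two_pos, one_div]
    _ ≤ exp (n * log (1 - v)) := exp_le_exp.2 hlog
    _ = (1 - v) ^ n := by rw [← log_pow, exp_log (pow_pos h1v n)]

lemma one_sub_pow_le {a t : ℝ} {n : ℕ} (ha : 0 < a) (ht : t ≤ 1) (hn : -log a ≤ n * t) :
    (1 - t) ^ n ≤ a :=
  calc (1 - t) ^ n ≤ exp (-t) ^ n := pow_le_pow_left₀ (sub_nonneg.2 ht) (one_sub_le_exp_neg t) n
    _ = exp (-(n * t)) := by rw [← exp_nat_mul]; ring_nf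
    _ ≤ exp (log a) := exp_le_exp.2 (by linarith)
    _ = a := exp_log ha

/-- The choice `n = ⌊log 2 · (1 - v) / v⌋` makes both `(1 - v)ⁿ ≥ 1/2` and `(1 - γ v)ⁿ ≤ a`. -/
lemma exists_pow_bounds {a γ v : ℝ} (ha : 0 < a) (ha1 : a ≤ 1) (hγ : 0 < γ) (hv0 : 0 < v)
    (hv1 : v < 1) (hγv : γ * v ≤ 1) (hv : v * (1 + log 2) ≤ log 2 + log a / γ) :
    ∃ n : ℕ, n ≠ 0 ∧ 1 / 2 ≤ (1 - v) ^ n ∧ (1 - γ * v) ^ n ≤ a := by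
  have hloga : log a / γ ≤ 0 := div_nonpos_of_nonpos_of_nonneg (log_nonpos ha.le ha1) hγ.le
  have hn : log 2 * (1 - v) / v - 1 < ⌊log 2 * (1 - v) / v⌋₊ := Nat.sub_one_lt_floor _
  rw [div_sub_one hv0.ne', div_lt_iff₀ hv0] at hn
  refine ⟨⌊log 2 * (1 - v) / v⌋₊, ?_, half_le_one_sub_pow hv1 ?_, one_sub_pow_le ha hγv ?_⟩
  · exact (Nat.floor_pos.2 ((one_le_div hv0).2 (by linarith))).ne'
  · exact (le_div_iff₀ hv0).1 (Nat.floor_le (div_nonneg (by nlinarith [log_pos one_lt_two]) hv0.le))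
  · have h : -log a / γ ≤ ⌊log 2 * (1 - v) / v⌋₊ * v := by rw [neg_div]; linarith
    rw [div_le_iff₀ hγ] at h
    linarith

lemma pow_floor_le_rpow_div {γ : ℝ} (hγ : 0 < γ) (hγ1 : γ ≤ 1) (t : ℝ) :
    γ ^ ⌊t⌋₊ ≤ γ ^ t / γ := by
  rw [le_div_iff₀ hγ, ← pow_succ, ← rpow_natCast]
  push_cast
  exact rpow_le_rpow_of_exponent_ge hγ hγ1 (Nat.lt_floor_add_one t).le

lemma exists_pos_mul_one_add_log_two_le {a γ : ℝ} (ha : 0 < a) (ha1 : a ≤ 1) (hγ : 0 < γ)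
    (haγ : -log a / log 2 < γ) :
    ∃ v : ℝ, 0 < v ∧ v ≤ 1 / 2 ∧ v * (1 + log 2) ≤ log 2 + log a / γ := by
  have hlog2 : 0 < log 2 := log_pos one_lt_two
  have hloga : log a / γ ≤ 0 := div_nonpos_of_nonpos_of_nonneg (log_nonpos ha.le ha1) hγ.le
  have hpos : 0 < log 2 + log a / γ := by
    rw [div_lt_iff₀ hlog2] at haγ
    have : -log a / γ < log 2 := by rw [div_lt_iff₀ hγ]; linarith
    rw [neg_div] at this
    linarith
  refine ⟨(log 2 + log a / γ) / (1 + log 2), by positivity, ?_,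
    (div_mul_cancel₀ _ (by positivity)).le⟩
  rw [div_le_iff₀ (by positivity)]
  linarith [log_two_lt_d9]

end Real

section Metric

variable {X : Type*} [MetricSpace X]

lemma dist_le_dlp {n : ℕ} {p : ℝ} (hp : 0 < p) (x y : Fin n → X) (i : Fin n) :
    dist (x i) (y i) ≤ dlp p x y :=
  calc dist (x i) (y i) = (dist (x i) (y i) ^ p) ^ (1 / p) := by
        rw [← rpow_mul dist_nonneg, mul_one_div_cancel hp.ne', rpow_one]
    _ ≤ dlp p x y := by
        unfold dlp
        gcongr
        exact Finset.single_le_sum (f := fun j => dist (x j) (y j) ^ p) (fun j _ => by positivity)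
          (Finset.mem_univ i)

lemma mem_cthickening_iff_infDist_le {A : Set X} (hA : A.Nonempty) {r : ℝ} (hr : 0 ≤ r) {x : X} :
    x ∈ cthickening r A ↔ infDist x A ≤ r := by
  rw [mem_cthickening_iff, infDist, ENNReal.le_ofReal_iff_toReal_le (infEDist_ne_top hA) hr]

lemma enl_pi_subset_pi_cthickening {n : ℕ} {p r : ℝ} (hp : 0 < p) (hr : 0 ≤ r) {A : Set X}
    (hA : A.Nonempty) :
    enl p r (univ.pi fun _ : Fin n => A) ⊆ univ.pi fun _ => cthickening r A := by
  intro z hz i _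
  rw [mem_cthickening_iff_infDist_le hA hr]
  refine le_of_forall_pos_lt_add fun ε hε => ?_
  have hbdd : BddBelow ((fun a => dlp p z a) '' univ.pi fun _ => A) :=
    ⟨0, forall_mem_image.2 fun a _ => by unfold dlp; positivity⟩
  obtain ⟨_, ⟨a, ha, rfl⟩, hlt⟩ :=
    (csInf_lt_iff hbdd ((univ_pi_nonempty_iff.2 fun _ => hA).image _)).1
      (lt_of_le_of_lt hz (lt_add_of_pos_right r hε))
  exact (infDist_le_dist_of_mem (ha i (mem_univ i))).trans_lt ((dist_le_dlp hp z a i).trans_lt hlt)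

end Metric

lemma MeasureTheory.Measure.pi_univ_pi_const {X : Type*} [MeasurableSpace X] (μ : Measure X)
    [SigmaFinite μ] (n : ℕ) (A : Set X) :
    Measure.pi (fun _ : Fin n => μ) (univ.pi fun _ => A) = μ A ^ n := by
  simp [Measure.pi_pi]

def HasProductConcentration {X : Type*} [MetricSpace X] [MeasurableSpace X] (μ : Measure X)
    (p r₀ a₀ : ℝ) : Prop :=
  ∀ n : ℕ, ∀ A : Set (Fin n → X), MeasurableSet A →
    1 / 2 ≤ (Measure.pi fun _ : Fin n => μ) A →
    1 - ENNReal.ofReal a₀ ≤ (Measure.pi fun _ : Fin n => μ) (enl p r₀ A)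

namespace HasProductConcentration

variable {X : Type*} [MetricSpace X] [MeasurableSpace X] {μ : Measure X} [SigmaFinite μ]
  {p r₀ a₀ : ℝ}

theorem ofReal_le_measure_cthickening (hμ : HasProductConcentration μ p r₀ a₀) (hp : 0 < p)
    (hr₀ : 0 ≤ r₀) (ha₀ : 0 ≤ a₀) {A : Set X} (hA : MeasurableSet A) (hne : A.Nonempty) {n : ℕ}
    (hn : n ≠ 0) {u w : ℝ} (hu : 0 ≤ u) (hw : 0 ≤ w) (hun : 1 / 2 ≤ u ^ n) (hwn : w ^ n ≤ 1 - a₀)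
    (huA : ENNReal.ofReal u ≤ μ A) : ENNReal.ofReal w ≤ μ (cthickening r₀ A) := by
  have half_le : 1 / 2 ≤ Measure.pi (fun _ : Fin n => μ) (univ.pi fun _ => A) := by
    rw [Measure.pi_univ_pi_const]
    calc (1 / 2 : ℝ≥0∞) = ENNReal.ofReal (1 / 2) := by
          rw [ENNReal.ofReal_div_of_pos two_pos]; simp
      _ ≤ ENNReal.ofReal (u ^ n) := ENNReal.ofReal_le_ofReal hun
      _ = ENNReal.ofReal u ^ n := ENNReal.ofReal_pow hu n
      _ ≤ μ A ^ n := by gcongr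
  have hconc := (hμ n _ (MeasurableSet.univ_pi fun _ => hA) half_le).trans
    (measure_mono (enl_pi_subset_pi_cthickening hp hr₀ hne))
  rw [Measure.pi_univ_pi_const] at hconc
  refine (ENNReal.pow_le_pow_left_iff hn).1 ?_
  calc ENNReal.ofReal w ^ n = ENNReal.ofReal (w ^ n) := (ENNReal.ofReal_pow hw n).symm
    _ ≤ ENNReal.ofReal (1 - a₀) := ENNReal.ofReal_le_ofReal hwn
    _ = 1 - ENNReal.ofReal a₀ := by rw [ENNReal.ofReal_sub 1 ha₀, ENNReal.ofReal_one]
    _ ≤ μ (cthickening r₀ A) ^ n := hconc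

theorem ofReal_one_sub_mul_le_measure_cthickening (hμ : HasProductConcentration μ p r₀ a₀)
    (hp : 0 < p) (hr₀ : 0 ≤ r₀) (ha₀ : 0 ≤ a₀) (ha₁ : a₀ < 1) {γ v : ℝ} (hγ : 0 < γ)
    (hγ1 : γ ≤ 1) (hv0 : 0 < v) (hv1 : v < 1)
    (hv : v * (1 + log 2) ≤ log 2 + log (1 - a₀) / γ) {A : Set X} (hA : MeasurableSet A)
    (hne : A.Nonempty) (hvA : ENNReal.ofReal (1 - v) ≤ μ A) :
    ENNReal.ofReal (1 - γ * v) ≤ μ (cthickening r₀ A) := by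
  have hγv : γ * v ≤ 1 := mul_le_one₀ hγ1 hv0.le hv1.le
  obtain ⟨n, hn, hvn, hγvn⟩ := exists_pow_bounds (sub_pos.2 ha₁) (by linarith) hγ hv0 hv1 hγv hv
  exact hμ.ofReal_le_measure_cthickening hp hr₀ ha₀ hA hne hn (sub_nonneg.2 hv1.le)
    (sub_nonneg.2 hγv) hvn hγvn hvA

theorem ofReal_one_sub_pow_mul_le_measure_cthickening [OpensMeasurableSpace X]
    (hμ : HasProductConcentration μ p r₀ a₀) (hp : 0 < p) (hr₀ : 0 ≤ r₀) (ha₀ : 0 ≤ a₀)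
    (ha₁ : a₀ < 1) {γ v : ℝ} (hγ : 0 < γ) (hγ1 : γ ≤ 1) (hv0 : 0 < v) (hv1 : v < 1)
    (hv : v * (1 + log 2) ≤ log 2 + log (1 - a₀) / γ) {A : Set X} (hne : A.Nonempty)
    (hvA : ENNReal.ofReal (1 - v) ≤ μ A) (k : ℕ) :
    ENNReal.ofReal (1 - γ ^ k * v) ≤ μ (cthickening (k * r₀) A) := by
  induction k with
  | zero => simpa using hvA.trans (measure_mono subset_closure)
  | succ k ih =>
    have hγkv : γ ^ k * v ≤ v := mul_le_of_le_one_left hv0.le (pow_le_one₀ hγ.le hγ1)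
    calc ENNReal.ofReal (1 - γ ^ (k + 1) * v) = ENNReal.ofReal (1 - γ * (γ ^ k * v)) := by ring_nf
      _ ≤ μ (cthickening r₀ (cthickening (k * r₀) A)) :=
          hμ.ofReal_one_sub_mul_le_measure_cthickening hp hr₀ ha₀ ha₁ hγ hγ1 (by positivity)
            (hγkv.trans_lt hv1) (hv.trans' (by gcongr)) isClosed_cthickening.measurableSet
            (hne.mono (self_subset_cthickening A)) ih
      _ ≤ μ (cthickening ((k + 1 : ℕ) * r₀) A) :=
          measure_mono ((cthickening_cthickening_subset hr₀ (by positivity) A).trans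
            (cthickening_mono (by push_cast; linarith) A))

theorem one_sub_ofReal_rpow_le_measure_cthickening [OpensMeasurableSpace X]
    (hμ : HasProductConcentration μ p r₀ a₀) (hp : 0 < p) (hr₀ : 0 < r₀) (ha₀ : 0 ≤ a₀)
    (ha₁ : a₀ < 1) {γ v : ℝ} (hγ : 0 < γ) (hγ1 : γ ≤ 1) (hv0 : 0 < v) (hv1 : v < 1)
    (hv : v * (1 + log 2) ≤ log 2 + log (1 - a₀) / γ) {A : Set X} (hne : A.Nonempty)
    (hvA : ENNReal.ofReal (1 - v) ≤ μ A) {r : ℝ} (hr : 0 ≤ r) :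
    1 - ENNReal.ofReal (v / γ * γ ^ (r / r₀)) ≤ μ (cthickening r A) := by
  set k := ⌊r / r₀⌋₊
  have hkr : k * r₀ ≤ r := (le_div_iff₀ hr₀).1 (Nat.floor_le (div_nonneg hr hr₀.le))
  have hkv : γ ^ k * v ≤ v / γ * γ ^ (r / r₀) :=
    calc γ ^ k * v ≤ γ ^ (r / r₀) / γ * v := by gcongr; exact pow_floor_le_rpow_div hγ hγ1 _
      _ = v / γ * γ ^ (r / r₀) := by ring
  calc 1 - ENNReal.ofReal (v / γ * γ ^ (r / r₀))
      ≤ 1 - ENNReal.ofReal (γ ^ k * v) := tsub_le_tsub_left (ENNReal.ofReal_le_ofReal hkv) 1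
    _ = ENNReal.ofReal (1 - γ ^ k * v) := by
        rw [ENNReal.ofReal_sub 1 (by positivity), ENNReal.ofReal_one]
    _ ≤ μ (cthickening (k * r₀) A) :=
        hμ.ofReal_one_sub_pow_mul_le_measure_cthickening hp hr₀.le ha₀ ha₁ hγ hγ1 hv0 hv1 hv hne
          hvA k
    _ ≤ μ (cthickening r A) := measure_mono (cthickening_mono hkr A)

end HasProductConcentration

/-- self-improvement of dimension free concentration, Talagrand's
argument: if for some `r₀ > 0` and `a₀ ∈ [0,1/2)` every Borel `A ⊆ Xⁿ` (any `n`) with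
`μⁿ(A) ≥ 1/2` satisfies `μⁿ(A_{r₀,p}) ≥ 1 - a₀`, then for every
`γ ∈ (-log(1-a₀)/log 2, 1)` there is `c ∈ [1/2,1)` depending only on `γ` and `a₀`
such that every Borel `A ⊆ X` with `μ(A) ≥ c` satisfies
`μ(A_r) ≥ 1 - ((1-c)/γ) γ^{r/r₀}` for all `r ≥ 0`. -/
theorem concentration_self_improvement {X : Type*} [MetricSpace X] [MeasurableSpace X]
    [OpensMeasurableSpace X] (μ : Measure X) [IsProbabilityMeasure μ]
    (p : ℝ) (hp : 1 ≤ p) (r₀ a₀ : ℝ) (hr₀ : 0 < r₀) (ha₀ : 0 ≤ a₀) (ha₀' : a₀ < 1 / 2)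
    (H : ∀ n : ℕ, ∀ A : Set (Fin n → X), MeasurableSet A →
      1 / 2 ≤ (Measure.pi fun _ : Fin n => μ) A →
      1 - ENNReal.ofReal a₀ ≤ (Measure.pi fun _ : Fin n => μ) (enl p r₀ A)) :
    ∀ γ : ℝ, -Real.log (1 - a₀) / Real.log 2 < γ → γ < 1 →
      ∃ c : ℝ, 1 / 2 ≤ c ∧ c < 1 ∧
        ∀ A : Set X, MeasurableSet A → ENNReal.ofReal c ≤ μ A →
          ∀ r : ℝ, 0 ≤ r →
            1 - ENNReal.ofReal ((1 - c) / γ * γ ^ (r / r₀)) ≤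
              μ {x | Metric.infDist x A ≤ r} := by
  intro γ hγ hγ1
  have hloga : log (1 - a₀) ≤ 0 := log_nonpos (by linarith) (by linarith)
  have hγ0 : 0 < γ := (div_nonneg (neg_nonneg.2 hloga) (log_pos one_lt_two).le).trans_lt hγ
  obtain ⟨v, hv0, hv1, hv⟩ :=
    exists_pos_mul_one_add_log_two_le (by linarith) (by linarith) hγ0 hγ
  refine ⟨1 - v, by linarith, by linarith, fun A _ hvA r hr => ?_⟩
  have hne : A.Nonempty :=
    nonempty_of_measure_ne_zero ((ENNReal.ofReal_pos.2 (by linarith)).trans_le hvA).ne'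
  have hset : {x | infDist x A ≤ r} = cthickening r A :=
    ext fun x => (mem_cthickening_iff_infDist_le hne hr).symm
  rw [sub_sub_cancel, hset]
  exact HasProductConcentration.one_sub_ofReal_rpow_le_measure_cthickening H (by linarith) hr₀ ha₀
    (by linarith) hγ0 hγ1.le hv0 (by linarith) hv hne hvA hr
end
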